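/- arXiv:math/0601482 — 2 statements merged into one kernel-verified Lean document; each statement's English description precedes it below -/
import Mathlib

section
/- Let (W,S) be a Coxeter system with geometric representation and set of positive roots Φ⁺. If β₁, β₂, β₃ ∈ Φ⁺ satisfy (βᵢ, βⱼ) ≤ -1 for all i ≠ j, then the reflection subgroup ⟨s_{β₁}, s_{β₂}, s_{β₃}⟩ of W is isomorphic to the universal Coxeter group W_(3) = Z/2 * Z/2 * Z/2. -/
/-!
The reflections `t i = s_{β i}` play ping-pong on `V`. Call `v` dominated at `i` if
`v = -∑ j, c j • β j` with `c ≥ 0` whose largest coefficient is `c i ≥ 1`. Since `(β h, β h) = 1`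
and `(β j, β h) ≤ -1` for `j ≠ h`, the reflection `t h` maps a vector dominated at some `i ≠ h`
to one dominated at `h`. Starting from `t i (β i) = -β i`, a word `t i₁ ⋯ t iₖ` without two equal
adjacent letters therefore maps the positive root `β iₖ` to a vector dominated at `i₁`, which
cannot be nonnegative; so the word is not `1`. As reduced words never repeat a letter twice in a
row, the map `W₍₃₎ → W`, `s i ↦ t i`, is injective; its image is `⟨t 0, t 1, t 2⟩`.
-/

section GeometricRepresentation

variable {B : Type*} [Fintype B] [DecidableEq B]

/-- The matrix of the canonical bilinear form of the geometric representation of a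
Coxeter group: `k s t = -cos (π / m s t)`, where an entry `m s t = 0` of the Coxeter
matrix stands for `∞` (so `k s t = -1` in that case).  In particular `k s s = 1`. -/
noncomputable def cosMatrix (M : CoxeterMatrix B) : Matrix B B ℝ :=
  Matrix.of fun a b => if M a b = 0 then -1 else -Real.cos (Real.pi / (M a b : ℝ))

/-- The canonical invariant symmetric bilinear form on the geometric representation
`V = B → ℝ` of a Coxeter group, with the simple roots `α_s = Pi.single s 1` as an
orthonormal-with-respect-to-`cosMatrix` basis:  `(v, w) = ∑ a b, v a * w b * k a b`. -/
noncomputable def bform (M : CoxeterMatrix B) (v w : B → ℝ) : ℝ :=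
  ∑ a, ∑ b, v a * w b * cosMatrix M a b

variable {W : Type*} [Group W] {M : CoxeterMatrix B}

/-- `IsGeometricRep cs ρ` asserts that the homomorphism `ρ` from `W` to the linear
automorphisms of `V = B → ℝ` is the geometric representation of the Coxeter system
`cs`: each simple reflection acts by `v ↦ v - 2 (v, α_s) α_s`. -/
def IsGeometricRep (cs : CoxeterSystem M W) (ρ : W →* ((B → ℝ) ≃ₗ[ℝ] (B → ℝ))) : Prop :=
  ∀ (i : B) (v : B → ℝ),
    ρ (cs.simple i) v = v - (2 * bform M v (Pi.single i 1)) • (Pi.single i 1 : B → ℝ)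

/-- `β` is a root of the Coxeter system: an element of the orbit `W · {α_s}`. -/
def IsRoot (cs : CoxeterSystem M W) (ρ : W →* ((B → ℝ) ≃ₗ[ℝ] (B → ℝ)))
    (β : B → ℝ) : Prop :=
  ∃ (w : W) (i : B), β = ρ w (Pi.single i 1)

/-- `β` is a positive root: a root all of whose coordinates in the basis of simple
roots are nonnegative. -/
def IsPositiveRoot (cs : CoxeterSystem M W) (ρ : W →* ((B → ℝ) ≃ₗ[ℝ] (B → ℝ)))
    (β : B → ℝ) : Prop :=
  IsRoot cs ρ β ∧ ∀ a, 0 ≤ β a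

/-- `t` is the reflection `s_β` of `W` corresponding to the root `β`:
if `β = w · α_i` then `s_β = w s_i w⁻¹`. -/
def IsReflectionWithRoot (cs : CoxeterSystem M W) (ρ : W →* ((B → ℝ) ≃ₗ[ℝ] (B → ℝ)))
    (t : W) (β : B → ℝ) : Prop :=
  ∃ (w : W) (i : B), t = w * cs.simple i * w⁻¹ ∧ β = ρ w (Pi.single i 1)

end GeometricRepresentation

/-- The Coxeter matrix of the universal Coxeter group `W₍₃₎` on three generators. -/
def M3 : CoxeterMatrix (Fin 3) where
  M := Matrix.of fun i j => if i = j then 1 else 0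
  isSymm := by decide
  diagonal := by decide
  off_diagonal := by intro i i' h; simp [Matrix.of_apply, h]

open Function

namespace CoxeterSystem

variable {B W : Type*} [Group W] {M : CoxeterMatrix B} (cs : CoxeterSystem M W)

theorem IsReduced.isChain_ne {cs : CoxeterSystem M W} {ω : List B} (hω : cs.IsReduced ω) :
    ω.IsChain (· ≠ ·) := by
  refine List.isChain_iff_forall_rel_of_append_cons_cons.mpr ?_
  rintro i _ l₁ l₂ rfl rfl
  have hcancel : cs.wordProd (l₁ ++ i :: i :: l₂) = cs.wordProd (l₁ ++ l₂) := by
    simp only [wordProd_append, wordProd_cons, ← mul_assoc, simple_mul_simple_self,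
      mul_one]
  have hle := cs.length_wordProd_le (l₁ ++ l₂)
  rw [← hcancel, hω.eq] at hle
  simp only [List.length_append, List.length_cons] at hle
  omega

theorem lift_wordProd {G : Type*} [Group G] {f : B → G} (hf : M.IsLiftable f) (ω : List B) :
    cs.lift ⟨f, hf⟩ (cs.wordProd ω) = (ω.map f).prod := by
  simp only [wordProd, map_list_prod, List.map_map, comp_def, lift_apply_simple]

theorem range_lift {G : Type*} [Group G] {f : B → G} (hf : M.IsLiftable f) :
    (cs.lift ⟨f, hf⟩).range = Subgroup.closure (Set.range f) := by
  rw [MonoidHom.range_eq_map, ← cs.subgroup_closure_range_simple, MonoidHom.map_closure,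
    ← Set.range_comp]
  congr
  exact funext (cs.lift_apply_simple hf)

theorem injective_of_map_wordProd_ne_one {G : Type*} [Group G] (φ : W →* G)
    (h : ∀ i ω, (i :: ω).IsChain (· ≠ ·) → φ (cs.wordProd (i :: ω)) ≠ 1) : Injective φ := by
  refine (injective_iff_map_eq_one φ).mpr fun w hw => ?_
  obtain ⟨ω, hred, rfl⟩ := cs.exists_isReduced w
  cases ω with
  | nil => exact cs.wordProd_nil
  | cons i ω => exact absurd hw (h i ω hred.isChain_ne)

end CoxeterSystem

theorem isLiftable_M3 {G : Type*} [Monoid G] {f : Fin 3 → G} (hf : ∀ i, f i * f i = 1) :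
    M3.IsLiftable f := by
  intro i j
  by_cases hij : i = j
  · subst hij
    rw [M3.diagonal, pow_one, hf]
  · rw [show M3 i j = 0 from if_neg hij, pow_zero]

section BilinearForm

variable {B : Type*} {M : CoxeterMatrix B}

theorem cosMatrix_comm (a b : B) : cosMatrix M a b = cosMatrix M b a := by
  simp only [cosMatrix, Matrix.of_apply, M.symmetric a b]

theorem cosMatrix_self (a : B) : cosMatrix M a a = 1 := by
  simp [cosMatrix]

variable [Fintype B]

theorem bform_eq_toLinearMap₂' [DecidableEq B] (v w : B → ℝ) :
    bform M v w = Matrix.toLinearMap₂' ℝ (cosMatrix M) v w := by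
  simp only [bform, Matrix.toLinearMap₂'_apply, smul_eq_mul, mul_assoc]

theorem bform_comm (v w : B → ℝ) : bform M v w = bform M w v := by
  rw [bform, Finset.sum_comm]
  exact Finset.sum_congr rfl fun a _ => Finset.sum_congr rfl fun b _ => by
    rw [cosMatrix_comm]; ring

theorem bform_single_self [DecidableEq B] (i : B) :
    bform M (Pi.single i 1) (Pi.single i 1) = 1 := by
  simp [bform, Pi.single_apply, cosMatrix_self]

theorem bform_sub_smul_sub_smul (v u α : B → ℝ) (a b : ℝ) :
    bform M (v - a • α) (u - b • α) =
      bform M v u - b * bform M v α - a * bform M α u + a * b * bform M α α := by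
  classical
  simp only [bform_eq_toLinearMap₂', map_sub, map_smul, LinearMap.sub_apply,
    LinearMap.smul_apply, smul_eq_mul]
  ring

end BilinearForm

section Roots

variable {B W : Type*} [DecidableEq B] [Group W] {M : CoxeterMatrix B}
  {cs : CoxeterSystem M W} {ρ : W →* ((B → ℝ) ≃ₗ[ℝ] (B → ℝ))}

theorem IsRoot.ne_zero {β : B → ℝ} (hβ : IsRoot cs ρ β) : β ≠ 0 := by
  obtain ⟨w, i, rfl⟩ := hβ
  simp

theorem IsReflectionWithRoot.isRoot {t : W} {β : B → ℝ} (ht : IsReflectionWithRoot cs ρ t β) :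
    IsRoot cs ρ β :=
  let ⟨w, i, _, hβ⟩ := ht
  ⟨w, i, hβ⟩

theorem IsReflectionWithRoot.mul_self {t : W} {β : B → ℝ}
    (ht : IsReflectionWithRoot cs ρ t β) : t * t = 1 := by
  obtain ⟨w, i, rfl, -⟩ := ht
  simp [mul_assoc]

variable [Fintype B]

theorem IsGeometricRep.bform_map (hρ : IsGeometricRep cs ρ) (w : W) (v u : B → ℝ) :
    bform M (ρ w v) (ρ w u) = bform M v u := by
  induction w using cs.simple_induction generalizing v u with
  | simple i =>
    rw [hρ, hρ, bform_sub_smul_sub_smul, bform_single_self, bform_comm (Pi.single i 1) u]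
    ring
  | one => rw [map_one]; rfl
  | mul w w' hw hw' =>
    rw [map_mul, LinearEquiv.mul_apply, LinearEquiv.mul_apply, hw, hw']

theorem IsRoot.bform_self (hρ : IsGeometricRep cs ρ) {β : B → ℝ} (hβ : IsRoot cs ρ β) :
    bform M β β = 1 := by
  obtain ⟨w, i, rfl⟩ := hβ
  rw [hρ.bform_map, bform_single_self]

theorem IsReflectionWithRoot.apply (hρ : IsGeometricRep cs ρ) {t : W} {β : B → ℝ}
    (ht : IsReflectionWithRoot cs ρ t β) (v : B → ℝ) :
    ρ t v = v - (2 * bform M v β) • β := by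
  obtain ⟨w, i, rfl, rfl⟩ := ht
  have hcancel (x : B → ℝ) : ρ w (ρ w⁻¹ x) = x := by
    rw [← LinearEquiv.mul_apply, ← map_mul, mul_inv_cancel, map_one]; rfl
  rw [map_mul, map_mul, LinearEquiv.mul_apply, LinearEquiv.mul_apply, hρ, map_sub, map_smul,
    hcancel, ← hρ.bform_map w, hcancel]

end Roots

section NegDominantComb

variable {ι V : Type*} [Fintype ι] [AddCommGroup V] [Module ℝ V]

def IsNegDominantComb (β : ι → V) (i : ι) (v : V) : Prop :=
  ∃ c : ι → ℝ, 0 ≤ c ∧ 1 ≤ c i ∧ (∀ j, c j ≤ c i) ∧ v = -∑ j, c j • β j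

theorem isNegDominantComb_neg (β : ι → V) (i : ι) : IsNegDominantComb β i (-β i) := by
  classical
  refine ⟨Pi.single i 1, Pi.single_nonneg.mpr zero_le_one, by simp, fun j => ?_, ?_⟩
  · by_cases hj : j = i <;> simp [hj]
  · rw [← Fintype.linearCombination_apply, Fintype.linearCombination_apply_single, one_smul]

theorem IsNegDominantComb.eq_zero_of_nonneg [PartialOrder V] [IsOrderedAddMonoid V]
    [PosSMulMono ℝ V] {β : ι → V} (hβ : ∀ j, 0 ≤ β j) {i : ι} {v : V}
    (hv : IsNegDominantComb β i v) (hv0 : 0 ≤ v) : β i = 0 := by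
  obtain ⟨c, hc0, hci, -, rfl⟩ := hv
  have hle : c i • β i ≤ ∑ j, c j • β j :=
    Finset.single_le_sum (fun j _ => smul_nonneg (hc0 j) (hβ j)) (Finset.mem_univ i)
  have hzero : c i • β i = 0 :=
    le_antisymm (hle.trans (neg_nonneg.mp hv0)) (smul_nonneg (hc0 i) (hβ i))
  exact (smul_eq_zero.mp hzero).resolve_left (by linarith)

theorem IsNegDominantComb.sub_bform_smul {B : Type*} [Fintype B] {M : CoxeterMatrix B}
    {β : ι → B → ℝ} {i h : ι} {v : B → ℝ} (hv : IsNegDominantComb β i v) (hhi : h ≠ i)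
    (hself : bform M (β h) (β h) = 1) (hform : ∀ j, j ≠ h → bform M (β j) (β h) ≤ -1) :
    IsNegDominantComb β h (v - (2 * bform M v (β h)) • β h) := by
  classical
  obtain ⟨c, hc0, hci, hmax, rfl⟩ := hv
  set S := ∑ j, c j * bform M (β j) (β h) with hS_def
  have hvS : bform M (-∑ j, c j • β j) (β h) = -S := by
    simp only [S, bform_eq_toLinearMap₂', map_neg, map_sum, map_smul, LinearMap.neg_apply,
      LinearMap.sum_apply, LinearMap.smul_apply, smul_eq_mul]
  have hrest : ∑ j ∈ Finset.univ.erase h, c j * bform M (β j) (β h) ≤ -c i := calc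
    _ ≤ ∑ j ∈ Finset.univ.erase h, -c j := Finset.sum_le_sum fun j hj => by
      simpa using mul_le_mul_of_nonneg_left (hform j (Finset.ne_of_mem_erase hj)) (hc0 j)
    _ = -∑ j ∈ Finset.univ.erase h, c j := Finset.sum_neg_distrib _
    _ ≤ -c i := neg_le_neg <| Finset.single_le_sum (fun j _ => hc0 j)
      (Finset.mem_erase.mpr ⟨hhi.symm, Finset.mem_univ i⟩)
  have hS : S ≤ c h - c i := by
    rw [hS_def, ← Finset.add_sum_erase _ _ (Finset.mem_univ h), hself, mul_one]
    linarith
  -- the new coefficient of `β h` is `c h - 2 S ≥ 2 c i - c h ≥ c i`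
  set c' : ι → ℝ := c + Pi.single h (-(2 * S))
  have hc'h : c' h = c h - 2 * S := by simp [c', sub_eq_add_neg]
  have hc'j (j : ι) (hj : j ≠ h) : c' j = c j := by simp [c', hj]
  have hc'i : c i ≤ c' h := by linarith [hmax h]
  refine ⟨c', fun j => ?_, hci.trans hc'i, fun j => ?_, ?_⟩
  · rcases eq_or_ne j h with rfl | hj
    · exact zero_le_one.trans (hci.trans hc'i)
    · exact hc'j j hj ▸ hc0 j
  · rcases eq_or_ne j h with rfl | hj
    · rfl
    · exact hc'j j hj ▸ (hmax j).trans hc'i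
  · have hsum : ∑ j, c' j • β j = ∑ j, c j • β j - (2 * S) • β h := by
      rw [← Fintype.linearCombination_apply, map_add, Fintype.linearCombination_apply_single,
        Fintype.linearCombination_apply]
      module
    rw [hvS, hsum]
    module

end NegDominantComb

section ReflectionWords

variable {B W ι : Type*} [Fintype B] [DecidableEq B] [Group W] [Fintype ι]
  {M : CoxeterMatrix B} {cs : CoxeterSystem M W} {ρ : W →* ((B → ℝ) ≃ₗ[ℝ] (B → ℝ))}
  {β : ι → B → ℝ} {t : ι → W}

theorem isNegDominantComb_prod_apply (hρ : IsGeometricRep cs ρ)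
    (ht : ∀ i, IsReflectionWithRoot cs ρ (t i) (β i))
    (hform : ∀ i j, i ≠ j → bform M (β i) (β j) ≤ -1) {h : ι} {ℓ : List ι}
    (hℓ : (h :: ℓ).IsChain (· ≠ ·)) :
    IsNegDominantComb β h
      (ρ ((h :: ℓ).map t).prod (β ((h :: ℓ).getLast (List.cons_ne_nil h ℓ)))) := by
  induction ℓ generalizing h with
  | nil =>
    simp only [List.map_cons, List.map_nil, List.prod_cons, List.prod_nil, mul_one,
      List.getLast_singleton]
    rw [(ht h).apply hρ, (ht h).isRoot.bform_self hρ]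
    convert isNegDominantComb_neg β h using 1
    module
  | cons i ℓ ih =>
    obtain ⟨hhi, hℓ⟩ := List.isChain_cons_cons.mp hℓ
    rw [List.map_cons, List.prod_cons, map_mul, LinearEquiv.mul_apply, List.getLast_cons_cons,
      (ht h).apply hρ]
    exact (ih hℓ).sub_bform_smul hhi ((ht h).isRoot.bform_self hρ) fun j hj => hform j h hj

theorem prod_map_reflections_ne_one (hρ : IsGeometricRep cs ρ)
    (hβ : ∀ i, IsPositiveRoot cs ρ (β i)) (ht : ∀ i, IsReflectionWithRoot cs ρ (t i) (β i))
    (hform : ∀ i j, i ≠ j → bform M (β i) (β j) ≤ -1) {h : ι} {ℓ : List ι}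
    (hℓ : (h :: ℓ).IsChain (· ≠ ·)) : ((h :: ℓ).map t).prod ≠ 1 := by
  intro hone
  have hdom := isNegDominantComb_prod_apply hρ ht hform hℓ
  rw [hone, map_one] at hdom
  exact (hβ h).1.ne_zero (hdom.eq_zero_of_nonneg (fun j => (hβ j).2) (hβ _).2)

end ReflectionWords

/-- If `β₁, β₂, β₃` are positive roots of a Coxeter system with `(β_i, β_j) ≤ -1` for
all `i ≠ j`, then the reflection subgroup `⟨s_{β₁}, s_{β₂}, s_{β₃}⟩` is isomorphic to
the universal Coxeter group `W₍₃₎ = ℤ/2 * ℤ/2 * ℤ/2`. -/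
theorem reflection_subgroup_isomorphic_to_W3
    {B W : Type*} [Fintype B] [DecidableEq B] [Group W] {M : CoxeterMatrix B}
    (cs : CoxeterSystem M W) (ρ : W →* ((B → ℝ) ≃ₗ[ℝ] (B → ℝ)))
    (hρ : IsGeometricRep cs ρ)
    (β : Fin 3 → (B → ℝ)) (t : Fin 3 → W)
    (hβ : ∀ i, IsPositiveRoot cs ρ (β i))
    (ht : ∀ i, IsReflectionWithRoot cs ρ (t i) (β i))
    (hform : ∀ i j, i ≠ j → bform M (β i) (β j) ≤ -1) :
    Nonempty ((Subgroup.closure {t 0, t 1, t 2} : Subgroup W) ≃* M3.Group) := by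
  have hlift : M3.IsLiftable t := isLiftable_M3 fun i => (ht i).mul_self
  let φ := M3.toCoxeterSystem.lift ⟨t, hlift⟩
  have hrange : φ.range = Subgroup.closure {t 0, t 1, t 2} := by
    rw [CoxeterSystem.range_lift]
    congr
    ext
    simp [Fin.exists_fin_succ, eq_comm]
  have hinj : Injective φ := M3.toCoxeterSystem.injective_of_map_wordProd_ne_one φ
    fun i ω hω => by
      rw [CoxeterSystem.lift_wordProd]
      exact prod_map_reflections_ne_one hρ hβ ht hform hω
  exact ⟨(MulEquiv.subgroupCongr hrange.symm).trans (MonoidHom.ofInjective hinj).symm⟩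
end

section
/- In the universal Coxeter group W_(3) with a geometric representation determined by a bilinear form with (αᵢ,αᵢ)=1 and (αᵢ,αⱼ) ≤ -1 integers for i ≠ j: if α = c₁α₁ + c₂α₂ + c₃α₃ is a positive root whose reflection s_α is conjugate to s₁, then c₁ > 0. -/
/-- The universal Coxeter group `W₍₃₎ = ℤ/2 * ℤ/2 * ℤ/2`. -/
abbrev W3 : Type := M3.Group

/-- The canonical Coxeter system on `W₍₃₎`. -/
def cs3 : CoxeterSystem M3 W3 := M3.toCoxeterSystem

/-- The bilinear form on `V = Fin 3 → ℝ` with matrix `k` in the basis of simple roots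
`α_i = Pi.single i 1`. -/
def bform3 (k : Matrix (Fin 3) (Fin 3) ℝ) (v w : Fin 3 → ℝ) : ℝ :=
  ∑ a, ∑ b, v a * w b * k a b

namespace CoxeterSystem

variable {B W : Type*} [Group W] [DecidableEq B] {M : CoxeterMatrix B} (cs : CoxeterSystem M W)

def signAt (i₀ : B) (heven : ∀ i, i ≠ i₀ → Even (M i i₀)) : W →* ℤˣ :=
  cs.lift ⟨fun i => if i = i₀ then -1 else 1, by
    intro i i'
    rcases eq_or_ne i i' with rfl | hii'
    · simp only [M.diagonal, pow_one]
      split_ifs <;> simp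
    · by_cases hi : i = i₀ <;> by_cases hi' : i' = i₀
      · exact absurd (hi.trans hi'.symm) hii'
      · subst hi; simp [hi', (M.symmetric _ _ ▸ heven i' hi').neg_one_pow]
      · subst hi'; simp [hi, (heven i hi).neg_one_pow]
      · simp [hi, hi']⟩

theorem signAt_simple (i₀ : B) (heven : ∀ i, i ≠ i₀ → Even (M i i₀)) (i : B) :
    cs.signAt i₀ heven (cs.simple i) = if i = i₀ then -1 else 1 :=
  cs.lift_apply_simple _ i

theorem eq_of_isConj_simple (i₀ : B) (heven : ∀ i, i ≠ i₀ → Even (M i i₀)) {i : B}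
    (h : IsConj (cs.simple i₀) (cs.simple i)) : i = i₀ := by
  have := isConj_iff_eq.mp ((cs.signAt i₀ heven).map_isConj h)
  by_contra hi
  simp [signAt_simple, hi] at this

end CoxeterSystem

theorem single_one_apply_mem_bot {ι R : Type*} [DecidableEq ι] [Ring R] (i a : ι) :
    (Pi.single i (1 : R) : ι → R) a ∈ (⊥ : Subring R) := by
  rcases eq_or_ne a i with rfl | h
  · simp
  · simp [h]

theorem bform3_mem_bot {k : Matrix (Fin 3) (Fin 3) ℝ} {v w : Fin 3 → ℝ}
    (hk : ∀ a b, k a b ∈ (⊥ : Subring ℝ)) (hv : ∀ a, v a ∈ (⊥ : Subring ℝ))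
    (hw : ∀ b, w b ∈ (⊥ : Subring ℝ)) : bform3 k v w ∈ (⊥ : Subring ℝ) :=
  Subring.sum_mem _ fun a _ => Subring.sum_mem _ fun b _ => mul_mem (mul_mem (hv a) (hw b)) (hk a b)

section GeometricRepresentation

variable {W : Type*} [Group W] {M : CoxeterMatrix (Fin 3)} (cs : CoxeterSystem M W)
  {k : Matrix (Fin 3) (Fin 3) ℝ} {ρ : W →* ((Fin 3 → ℝ) ≃ₗ[ℝ] (Fin 3 → ℝ))}

theorem apply_sub_div_two_mem_bot (hk : ∀ a b, k a b ∈ (⊥ : Subring ℝ))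
    (hρ : ∀ (i : Fin 3) (v : Fin 3 → ℝ),
      ρ (cs.simple i) v = v - (2 * bform3 k v (Pi.single i 1)) • (Pi.single i 1 : Fin 3 → ℝ))
    (w : W) {v : Fin 3 → ℝ} (hv : ∀ a, v a ∈ (⊥ : Subring ℝ)) (a : Fin 3) :
    (ρ w v a - v a) / 2 ∈ (⊥ : Subring ℝ) := by
  induction w using cs.simple_induction_left generalizing a with
  | one => simp
  | mul_simple_left w i ih =>
    set u := ρ w v
    have hu : ∀ b, u b ∈ (⊥ : Subring ℝ) := fun b => by
      simpa [mul_div_cancel₀] using add_mem (hv b) (mul_mem (ofNat_mem _ 2) (ih b))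
    have : (ρ (cs.simple i * w) v a - v a) / 2
        = (u a - v a) / 2 - bform3 k u (Pi.single i 1) * (Pi.single i 1 : Fin 3 → ℝ) a := by
      rw [map_mul, LinearEquiv.mul_apply, hρ]
      simp only [Pi.sub_apply, Pi.smul_apply, smul_eq_mul]
      ring
    rw [this]
    exact sub_mem (ih a) (mul_mem (bform3_mem_bot hk hu (single_one_apply_mem_bot (R := ℝ) i))
      (single_one_apply_mem_bot (R := ℝ) i a))

end GeometricRepresentation

theorem first_coefficient_positive_of_conjugate_to_s1_general
    (k : Matrix (Fin 3) (Fin 3) ℝ)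
    (hdiag : ∀ i, k i i = 1)
    (hint : ∀ i j, i ≠ j → (∃ n : ℤ, k i j = (n : ℝ)) ∧ k i j ≤ -1)
    (ρ : W3 →* ((Fin 3 → ℝ) ≃ₗ[ℝ] (Fin 3 → ℝ)))
    (hρ : ∀ (i : Fin 3) (v : Fin 3 → ℝ),
      ρ (cs3.simple i) v = v - (2 * bform3 k v (Pi.single i 1)) • (Pi.single i 1 : Fin 3 → ℝ))
    (c : Fin 3 → ℝ) (hc : ∀ i, 0 ≤ c i)
    (w : W3) (j : Fin 3)
    (hroot : c = ρ w (Pi.single j 1))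
    (hconj : IsConj (cs3.simple 0) (w * cs3.simple j * w⁻¹)) :
    0 < c 0 := by
  have hj : j = 0 :=
    cs3.eq_of_isConj_simple 0 (fun i hi => by simp [M3, hi])
      (hconj.trans (isConj_iff.mpr ⟨w, rfl⟩).symm)
  subst hj
  have hk : ∀ a b, k a b ∈ (⊥ : Subring ℝ) := fun a b => by
    rcases eq_or_ne a b with rfl | hab
    · simp [hdiag]
    · obtain ⟨n, hn⟩ := (hint a b hab).1
      exact Subring.mem_bot.mpr ⟨n, hn.symm⟩
  obtain ⟨n, hn⟩ := Subring.mem_bot.mp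
    (apply_sub_div_two_mem_bot cs3 hk hρ w (single_one_apply_mem_bot 0) 0)
  have hc0 : c 0 = 1 + 2 * n := by
    rw [hroot]
    linarith [show (Pi.single 0 1 : Fin 3 → ℝ) 0 = 1 from Pi.single_eq_same 0 1]
  have hn_gt : (-1 : ℤ) < n := by
    have : ((-1 : ℤ) : ℝ) < n := by push_cast; linarith [hc 0]
    exact_mod_cast this
  have hn_nonneg : (0 : ℝ) ≤ n := by exact_mod_cast (show (0 : ℤ) ≤ n by omega)
  linarith

/-- Let `W₍₃₎` act on `V = Fin 3 → ℝ` through a geometric representation determined by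
an invariant bilinear form with `(α_i, α_i) = 1` and `(α_i, α_j)` an integer `≤ -1`
for `i ≠ j`.  If `α = c₁α₁ + c₂α₂ + c₃α₃` is a positive root whose reflection `s_α`
is conjugate to `s₁`, then `c₁ > 0`. -/
theorem first_coefficient_positive_of_conjugate_to_s1
    (k : Matrix (Fin 3) (Fin 3) ℝ)
    (hdiag : ∀ i, k i i = 1)
    (hsymm : ∀ i j, k i j = k j i)
    (hint : ∀ i j, i ≠ j → (∃ n : ℤ, k i j = (n : ℝ)) ∧ k i j ≤ -1)
    (ρ : W3 →* ((Fin 3 → ℝ) ≃ₗ[ℝ] (Fin 3 → ℝ)))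
    (hρ : ∀ (i : Fin 3) (v : Fin 3 → ℝ),
      ρ (cs3.simple i) v = v - (2 * bform3 k v (Pi.single i 1)) • (Pi.single i 1 : Fin 3 → ℝ))
    (c : Fin 3 → ℝ) (hc : ∀ i, 0 ≤ c i)
    (w : W3) (j : Fin 3)
    (hroot : c = ρ w (Pi.single j 1))
    (hconj : IsConj (cs3.simple 0) (w * cs3.simple j * w⁻¹)) :
    0 < c 0 :=
  first_coefficient_positive_of_conjugate_to_s1_general k hdiag hint ρ hρ c hc w j hroot hconj
end
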